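/- Let (J_ℓ)_{ℓ≥1} be a sequence of measurable subsets of the cube I^k = [−1,1]^k such that for every measurable set A ⊆ I^k of positive Lebesgue measure one has Σ_{ℓ≥1} |A ∩ J_ℓ| = ∞. Then the limsup set J* = ⋂_{n≥1} ⋃_{ℓ≥n} J_ℓ has full Lebesgue measure in I^k. -/
import Mathlib


open MeasureTheory Set Filter

theorem stmt_1 {k : ℕ} (cube : Set (Fin k → ℝ))
    (hcube : cube = Set.pi Set.univ fun _ : Fin k => Set.Icc (-1 : ℝ) 1)
    (J : ℕ → Set (Fin k → ℝ))
    (hJmeas : ∀ ℓ, MeasurableSet (J ℓ))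
    (hJsub : ∀ ℓ, J ℓ ⊆ cube)
    (hsum : ∀ A : Set (Fin k → ℝ), MeasurableSet A → A ⊆ cube → 0 < volume A →
      (∑' ℓ : ℕ, volume (A ∩ J ℓ)) = ⊤) :
    volume (cube \ ⋂ n : ℕ, ⋃ ℓ ≥ n, J ℓ) = 0 := by
  have hcubemeas : MeasurableSet cube := by
    rw [hcube]; exact MeasurableSet.univ_pi fun i => measurableSet_Icc
  have hcubefin : volume cube < ⊤ := by
    rw [hcube, Set.pi_univ_Icc]
    exact isCompact_Icc.measure_lt_top
  by_contra h
  have hex : ∃ n, volume (cube \ ⋃ ℓ ≥ n, J ℓ) ≠ 0 := by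
    by_contra h2
    push_neg at h2
    apply h
    rw [Set.diff_iInter, measure_iUnion_null_iff]
    exact h2
  obtain ⟨n, hn⟩ := hex
  set A := cube \ ⋃ ℓ ≥ n, J ℓ with hA
  have hAmeas : MeasurableSet A :=
    hcubemeas.diff (MeasurableSet.iUnion fun ℓ => MeasurableSet.iUnion fun _ => hJmeas ℓ)
  have hAsub : A ⊆ cube := diff_subset
  have hdiv := hsum A hAmeas hAsub (pos_iff_ne_zero.mpr hn)
  have hzero : ∀ ℓ ∉ Finset.range n, volume (A ∩ J ℓ) = 0 := by
    intro ℓ hℓ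
    have hℓn : n ≤ ℓ := by simpa using hℓ
    have : A ∩ J ℓ = ∅ := by
      apply Set.eq_empty_of_forall_notMem
      rintro x ⟨hxA, hxJ⟩
      exact hxA.2 (Set.mem_biUnion hℓn hxJ)
    rw [this, measure_empty]
  rw [tsum_eq_sum hzero] at hdiv
  have hfin : (∑ ℓ ∈ Finset.range n, volume (A ∩ J ℓ)) < ⊤ :=
    ENNReal.sum_lt_top.mpr fun ℓ _ =>
      lt_of_le_of_lt (measure_mono fun x hx => hJsub ℓ hx.2) hcubefin
  exact absurd hdiv hfin.ne
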